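/- arXiv:2305.14297 — 4 statements merged into one kernel-verified Lean document; each statement's English description precedes it below -/
import Mathlib

section
/- Let (a_{ij}), b_i, c_i = Σ_j a_{ij} be the coefficients of an explicit 4-stage Runge–Kutta method of order 4. If real numbers Γ₂, Γ₃, Γ₄ satisfy the seven equations: Σ_{i=2}^4 b_i c_i (Γ_i − 1) = 0; Σ_{i=2}^4 b_i c_i² (Γ_i² − 1) = 0; Σ_{i,j=2}^4 b_i a_{ij} c_j (Γ_i Γ_j − 1) = 0; Σ_{i,j=2}^4 b_i c_i a_{ij} c_j (Γ_i² Γ_j − 1) = 0; Σ_{i=2}^4 b_i c_i³ (Γ_i³ − 1) = 0; Γ₄ Γ₃ Γ₂ = 1; and Σ_{i,j=2}^4 b_i a_{ij} c_j² (Γ_i Γ_j² − 1) = 0, then Γ₂ = Γ₃ = Γ₄ = 1. -/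
/-!
Rescaling the stages, âᵢⱼ = Γᵢaᵢⱼ and ĉᵢ = Γᵢcᵢ with the same weights, turns the seven
equations into the statement that (â, b, ĉ) again satisfies the order conditions of orders 2–4.
Every explicit 4-stage tableau satisfying them has last node c₄ = 1 (Butcher's argument) and
b₃(c₄ − c₃) = b₄a₄₃(4c₄ − 3). For the two tableaux the first fact gives Γ₄ = 1 and the second
b₃c₃(Γ₃ − 1) = 0 with b₃ ≠ 0; if c₃ = 0, the conditions force c₂ = ĉ₂ = 1/2 instead.
Finally Γ₂Γ₃Γ₄ = 1 supplies the remaining factor. Stage i is the index i − 1 of `Fin 4`.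
-/

open Matrix in
/-- A nonzero row `U 2` kills `V`, so `V *ᵥ x = 0` for some `x ≠ 0`; the invertible upper-left
block of `U * V` then forces `x = (0, 0, x₂)`, so the last column of `V` vanishes. -/
theorem Matrix.row_two_eq_zero_or_col_two_eq_zero {R : Type*} [CommRing R] [IsDomain R]
    {U V : Matrix (Fin 3) (Fin 3) R} {p q r s : R}
    (hUV : U * V = !![p, q, 0; r, s, 0; 0, 0, 0]) (hdet : p * s - q * r ≠ 0) :
    U 2 = 0 ∨ ∀ i, V i 2 = 0 := by
  by_contra! ⟨hU, i, hV⟩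
  have hUV2 : U 2 ᵥ* V = 0 := by
    rw [← mul_apply_eq_vecMul, hUV]
    ext j
    fin_cases j <;> rfl
  obtain ⟨x, hx, hVx⟩ :=
    exists_mulVec_eq_zero_iff.mpr (exists_vecMul_eq_zero_iff.mp ⟨U 2, hU, hUV2⟩)
  have hUVx : !![p, q, 0; r, s, 0; 0, 0, 0] *ᵥ x = 0 := by
    rw [← hUV, ← mulVec_mulVec, hVx, mulVec_zero]
  have h0 : p * x 0 + q * x 1 = 0 := by
    simpa [mulVec, dotProduct, Fin.sum_univ_three] using congrFun hUVx 0
  have h1 : r * x 0 + s * x 1 = 0 := by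
    simpa [mulVec, dotProduct, Fin.sum_univ_three] using congrFun hUVx 1
  have hx0 : x 0 = 0 := (mul_eq_zero.mp (by linear_combination s * h0 - q * h1 :
    (p * s - q * r) * x 0 = 0)).resolve_left hdet
  have hx1 : x 1 = 0 := (mul_eq_zero.mp (by linear_combination p * h1 - r * h0 :
    (p * s - q * r) * x 1 = 0)).resolve_left hdet
  have hx2 : x 2 ≠ 0 := fun hx2 => hx (by ext j; fin_cases j <;> assumption)
  have hVi : V i 2 * x 2 = 0 := by
    simpa [mulVec, dotProduct, Fin.sum_univ_three, hx0, hx1] using congrFun hVx i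
  exact hV ((mul_eq_zero.mp hVi).resolve_right hx2)

structure ExplicitOrderConditions (a : Fin 4 → Fin 4 → ℝ) (b c : Fin 4 → ℝ) : Prop where
  lower : ∀ i j : Fin 4, i ≤ j → a i j = 0
  c_zero : c 0 = 0
  ord2 : ∑ i, b i * c i = 1 / 2
  ord3 : ∑ i, b i * c i ^ 2 = 1 / 3
  ord4 : ∑ i, ∑ j, b i * a i j * c j = 1 / 6
  ord5 : ∑ i, b i * c i ^ 3 = 1 / 4
  ord6 : ∑ i, ∑ j, b i * c i * a i j * c j = 1 / 8
  ord7 : ∑ i, ∑ j, b i * a i j * c j ^ 2 = 1 / 12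
  ord8 : ∑ i, ∑ j, ∑ k, b i * a i j * a j k * c k = 1 / 24

namespace ExplicitOrderConditions

variable {a : Fin 4 → Fin 4 → ℝ} {b c : Fin 4 → ℝ} (h : ExplicitOrderConditions a b c)
include h

theorem expanded :
    b 1 * c 1 + b 2 * c 2 + b 3 * c 3 = 1 / 2 ∧
    b 1 * c 1 ^ 2 + b 2 * c 2 ^ 2 + b 3 * c 3 ^ 2 = 1 / 3 ∧
    b 1 * c 1 ^ 3 + b 2 * c 2 ^ 3 + b 3 * c 3 ^ 3 = 1 / 4 ∧
    b 2 * a 2 1 * c 1 + b 3 * a 3 1 * c 1 + b 3 * a 3 2 * c 2 = 1 / 6 ∧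
    b 2 * c 2 * a 2 1 * c 1 + b 3 * c 3 * a 3 1 * c 1 + b 3 * c 3 * a 3 2 * c 2 = 1 / 8 ∧
    b 2 * a 2 1 * c 1 ^ 2 + b 3 * a 3 1 * c 1 ^ 2 + b 3 * a 3 2 * c 2 ^ 2 = 1 / 12 ∧
    b 3 * a 3 2 * a 2 1 * c 1 = 1 / 24 := by
  have ord := And.intro h.ord2 <| And.intro h.ord3 <| And.intro h.ord5 <| And.intro h.ord4 <|
    And.intro h.ord6 <| And.intro h.ord7 h.ord8
  simpa [Fin.sum_univ_four, h.lower, h.c_zero, add_assoc] using ord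

theorem chain_ne_zero : b 3 * a 3 2 * (a 2 1 * c 1) ≠ 0 := by
  obtain ⟨-, -, -, -, -, -, C4⟩ := h.expanded
  rw [← mul_assoc, C4]
  norm_num

theorem last_node_eq_one : c 3 = 1 := by
  obtain ⟨M1, M2, M3, C1, C2, C3, C4⟩ := h.expanded
  -- Rows of `U`: b, bc and dⱼ = Σᵢ bᵢaᵢⱼ − bⱼ(1 − cⱼ); columns of `V`: c, c² and (Ac)ⱼ − cⱼ²/2.
  let U : Matrix (Fin 3) (Fin 3) ℝ :=
    !![b 1, b 2, b 3;
      b 1 * c 1, b 2 * c 2, b 3 * c 3;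
      b 2 * a 2 1 + b 3 * a 3 1 - b 1 * (1 - c 1), b 3 * a 3 2 - b 2 * (1 - c 2), -b 3 * (1 - c 3)]
  let V : Matrix (Fin 3) (Fin 3) ℝ :=
    !![c 1, c 1 ^ 2, -c 1 ^ 2 / 2;
      c 2, c 2 ^ 2, a 2 1 * c 1 - c 2 ^ 2 / 2;
      c 3, c 3 ^ 2, a 3 1 * c 1 + a 3 2 * c 2 - c 3 ^ 2 / 2]
  have hUV : U * V = !![1 / 2, 1 / 3, 0; 1 / 3, 1 / 4, 0; 0, 0, 0] := by
    ext i j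
    fin_cases i <;> fin_cases j <;>
      simp only [U, V, Matrix.mul_apply, Fin.sum_univ_three, Matrix.of_apply, Matrix.cons_val',
        Matrix.cons_val_zero, Matrix.cons_val_one, Matrix.cons_val, Matrix.cons_val_fin_one,
        Fin.isValue, Fin.zero_eta, Fin.mk_one, Fin.reduceFinMk] <;>
      linarith
  rcases Matrix.row_two_eq_zero_or_col_two_eq_zero hUV (by norm_num) with hU | hV
  · have hb3 : b 3 ≠ 0 := left_ne_zero_of_mul (left_ne_zero_of_mul h.chain_ne_zero)
    have hd : -b 3 * (1 - c 3) = 0 := congrFun hU 2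
    linarith [(mul_eq_zero.mp hd).resolve_left (neg_ne_zero.mpr hb3)]
  · have hc1 : c 1 = 0 := by simpa [V] using hV 0
    simp [hc1] at C4

theorem b_two_mul_sub : b 2 * (c 3 - c 2) = b 3 * a 3 2 * (4 * c 3 - 3) := by
  obtain ⟨-, -, -, C1, C2, -, C4⟩ := h.expanded
  apply mul_right_cancel₀ (right_ne_zero_of_mul h.chain_ne_zero)
  linear_combination c 3 * C1 - C2 - (4 * c 3 - 3) * C4

theorem c_one_eq_of_c_two_eq_zero (h2 : c 2 = 0) : c 1 = 1 / 2 := by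
  obtain ⟨-, -, -, C1, -, C3, -⟩ := h.expanded
  rw [h2] at C1 C3
  linear_combination 6 * C3 - 6 * c 1 * C1

theorem rescale (Γ : Fin 4 → ℝ)
    (e1 : ∑ i ∈ Finset.univ.filter (fun i : Fin 4 => i ≠ 0),
      b i * c i * (Γ i - 1) = 0)
    (e2 : ∑ i ∈ Finset.univ.filter (fun i : Fin 4 => i ≠ 0),
      b i * c i ^ 2 * (Γ i ^ 2 - 1) = 0)
    (e3 : ∑ i ∈ Finset.univ.filter (fun i : Fin 4 => i ≠ 0),
      ∑ j ∈ Finset.univ.filter (fun j : Fin 4 => j ≠ 0),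
      b i * a i j * c j * (Γ i * Γ j - 1) = 0)
    (e4 : ∑ i ∈ Finset.univ.filter (fun i : Fin 4 => i ≠ 0),
      ∑ j ∈ Finset.univ.filter (fun j : Fin 4 => j ≠ 0),
      b i * c i * a i j * c j * (Γ i ^ 2 * Γ j - 1) = 0)
    (e5 : ∑ i ∈ Finset.univ.filter (fun i : Fin 4 => i ≠ 0),
      b i * c i ^ 3 * (Γ i ^ 3 - 1) = 0)
    (e6 : Γ 3 * Γ 2 * Γ 1 = 1)
    (e7 : ∑ i ∈ Finset.univ.filter (fun i : Fin 4 => i ≠ 0),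
      ∑ j ∈ Finset.univ.filter (fun j : Fin 4 => j ≠ 0),
      b i * a i j * c j ^ 2 * (Γ i * Γ j ^ 2 - 1) = 0) :
    ExplicitOrderConditions (fun i j => Γ i * a i j) b (fun i => Γ i * c i) := by
  obtain ⟨M1, M2, M3, C1, C2, C3, C4⟩ := h.expanded
  refine ⟨fun i j hij => by rw [h.lower i j hij, mul_zero], by rw [h.c_zero, mul_zero],
    ?_, ?_, ?_, ?_, ?_, ?_, ?_⟩ <;>
  simp only [Finset.sum_filter, ne_eq, ite_not, Fin.sum_univ_four, ↓reduceIte, Fin.reduceEq,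
    Fin.isValue, Fin.reduceLE, Std.le_refl, zero_le, h.lower, h.c_zero, mul_zero, zero_mul,
    zero_pow, OfNat.ofNat_ne_zero, not_false_eq_true, one_ne_zero, add_zero, zero_add]
    at e1 e2 e3 e4 e5 e7 ⊢
  · linear_combination e1 + M1
  · linear_combination e2 + M2
  · linear_combination e3 + C1
  · linear_combination e5 + M3
  · linear_combination e4 + C2
  · linear_combination e7 + C3
  · linear_combination Γ 3 * Γ 2 * Γ 1 * C4 + e6 / 24

theorem eq_one_of_rescale {Γ : Fin 4 → ℝ}
    (hΓ : ExplicitOrderConditions (fun i j => Γ i * a i j) b (fun i => Γ i * c i)) :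
    ∀ i ≠ 0, Γ i = 1 := by
  have hc3 := h.last_node_eq_one
  have hΓ3 : Γ 3 = 1 := by simpa [hc3] using hΓ.last_node_eq_one
  have hprod : Γ 3 * Γ 2 * Γ 1 = 1 := by
    obtain ⟨-, -, -, -, -, -, C4⟩ := h.expanded
    obtain ⟨-, -, -, -, -, -, hΓC4⟩ := hΓ.expanded
    apply mul_right_cancel₀ h.chain_ne_zero
    linear_combination hΓC4 - C4
  have hb2 : b 2 * (1 - c 2) = b 3 * a 3 2 := by
    have := h.b_two_mul_sub
    rw [hc3] at this
    linear_combination this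
  have hΓb2 : b 2 * (1 - Γ 2 * c 2) = b 3 * a 3 2 := by
    have := hΓ.b_two_mul_sub
    simp only [hΓ3, hc3] at this
    linear_combination this
  have hb2c2 : b 2 * c 2 * (Γ 2 - 1) = 0 := by linear_combination hb2 - hΓb2
  have hb2_ne : b 2 ≠ 0 := by
    rintro hb2_zero
    rw [hb2_zero, zero_mul] at hb2
    exact left_ne_zero_of_mul h.chain_ne_zero hb2.symm
  have hΓ12 : Γ 1 = 1 ∧ Γ 2 = 1 := by
    by_cases hc2 : c 2 = 0
    · have hΓ1 : Γ 1 = 1 := by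
        have := hΓ.c_one_eq_of_c_two_eq_zero (by simp [hc2])
        rw [h.c_one_eq_of_c_two_eq_zero hc2] at this
        linarith
      exact ⟨hΓ1, by simpa [hΓ3, hΓ1] using hprod⟩
    · have hΓ2 : Γ 2 = 1 := by
        linarith [(mul_eq_zero.mp hb2c2).resolve_left (mul_ne_zero hb2_ne hc2)]
      exact ⟨by simpa [hΓ3, hΓ2] using hprod, hΓ2⟩
  intro i hi
  fin_cases i
  exacts [absurd rfl hi, hΓ12.1, hΓ12.2, hΓ3]

end ExplicitOrderConditions

theorem stmt3_general
    (a : Fin 4 → Fin 4 → ℝ) (b c : Fin 4 → ℝ)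
    (hexp : ∀ i j : Fin 4, i ≤ j → a i j = 0)
    (hc : ∀ i, c i = ∑ j, a i j)
    (hord2 : ∑ i, b i * c i = 1 / 2)
    (hord3 : ∑ i, b i * c i ^ 2 = 1 / 3)
    (hord4 : ∑ i, ∑ j, b i * a i j * c j = 1 / 6)
    (hord5 : ∑ i, b i * c i ^ 3 = 1 / 4)
    (hord6 : ∑ i, ∑ j, b i * c i * a i j * c j = 1 / 8)
    (hord7 : ∑ i, ∑ j, b i * a i j * c j ^ 2 = 1 / 12)
    (hord8 : ∑ i, ∑ j, ∑ k, b i * a i j * a j k * c k = 1 / 24)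
    (Γ : Fin 4 → ℝ)
    (e1 : ∑ i ∈ Finset.univ.filter (fun i : Fin 4 => i ≠ 0),
      b i * c i * (Γ i - 1) = 0)
    (e2 : ∑ i ∈ Finset.univ.filter (fun i : Fin 4 => i ≠ 0),
      b i * c i ^ 2 * (Γ i ^ 2 - 1) = 0)
    (e3 : ∑ i ∈ Finset.univ.filter (fun i : Fin 4 => i ≠ 0),
      ∑ j ∈ Finset.univ.filter (fun j : Fin 4 => j ≠ 0),
      b i * a i j * c j * (Γ i * Γ j - 1) = 0)
    (e4 : ∑ i ∈ Finset.univ.filter (fun i : Fin 4 => i ≠ 0),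
      ∑ j ∈ Finset.univ.filter (fun j : Fin 4 => j ≠ 0),
      b i * c i * a i j * c j * (Γ i ^ 2 * Γ j - 1) = 0)
    (e5 : ∑ i ∈ Finset.univ.filter (fun i : Fin 4 => i ≠ 0),
      b i * c i ^ 3 * (Γ i ^ 3 - 1) = 0)
    (e6 : Γ 3 * Γ 2 * Γ 1 = 1)
    (e7 : ∑ i ∈ Finset.univ.filter (fun i : Fin 4 => i ≠ 0),
      ∑ j ∈ Finset.univ.filter (fun j : Fin 4 => j ≠ 0),
      b i * a i j * c j ^ 2 * (Γ i * Γ j ^ 2 - 1) = 0) :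
    ∀ i : Fin 4, i ≠ 0 → Γ i = 1 := by
  have h : ExplicitOrderConditions a b c :=
    ⟨hexp, by simp [hc, hexp], hord2, hord3, hord4, hord5, hord6, hord7, hord8⟩
  exact h.eq_one_of_rescale (h.rescale Γ e1 e2 e3 e4 e5 e6 e7)

/-- The Gröbner-basis step in Lemma 6 (4th order): for an explicit 4-stage
Runge–Kutta method of order 4, the only solution of the reduced polynomial
system \eqref{eq:redPGS_cond4} is Γ₂ = Γ₃ = Γ₄ = 1.
Here `Γ : Fin 4 → ℝ` with `Γ i` for `i ≠ 0` playing the roles of Γ₂, Γ₃, Γ₄. -/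
theorem stmt3
    (a : Fin 4 → Fin 4 → ℝ) (b c : Fin 4 → ℝ)
    (hexp : ∀ i j : Fin 4, i ≤ j → a i j = 0)
    (hc : ∀ i, c i = ∑ j, a i j)
    (hord1 : ∑ i, b i = 1)
    (hord2 : ∑ i, b i * c i = 1 / 2)
    (hord3 : ∑ i, b i * c i ^ 2 = 1 / 3)
    (hord4 : ∑ i, ∑ j, b i * a i j * c j = 1 / 6)
    (hord5 : ∑ i, b i * c i ^ 3 = 1 / 4)
    (hord6 : ∑ i, ∑ j, b i * c i * a i j * c j = 1 / 8)
    (hord7 : ∑ i, ∑ j, b i * a i j * c j ^ 2 = 1 / 12)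
    (hord8 : ∑ i, ∑ j, ∑ k, b i * a i j * a j k * c k = 1 / 24)
    (Γ : Fin 4 → ℝ)
    (e1 : ∑ i ∈ Finset.univ.filter (fun i : Fin 4 => i ≠ 0),
      b i * c i * (Γ i - 1) = 0)
    (e2 : ∑ i ∈ Finset.univ.filter (fun i : Fin 4 => i ≠ 0),
      b i * c i ^ 2 * (Γ i ^ 2 - 1) = 0)
    (e3 : ∑ i ∈ Finset.univ.filter (fun i : Fin 4 => i ≠ 0),
      ∑ j ∈ Finset.univ.filter (fun j : Fin 4 => j ≠ 0),
      b i * a i j * c j * (Γ i * Γ j - 1) = 0)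
    (e4 : ∑ i ∈ Finset.univ.filter (fun i : Fin 4 => i ≠ 0),
      ∑ j ∈ Finset.univ.filter (fun j : Fin 4 => j ≠ 0),
      b i * c i * a i j * c j * (Γ i ^ 2 * Γ j - 1) = 0)
    (e5 : ∑ i ∈ Finset.univ.filter (fun i : Fin 4 => i ≠ 0),
      b i * c i ^ 3 * (Γ i ^ 3 - 1) = 0)
    (e6 : Γ 3 * Γ 2 * Γ 1 = 1)
    (e7 : ∑ i ∈ Finset.univ.filter (fun i : Fin 4 => i ≠ 0),
      ∑ j ∈ Finset.univ.filter (fun j : Fin 4 => j ≠ 0),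
      b i * a i j * c j ^ 2 * (Γ i * Γ j ^ 2 - 1) = 0) :
    ∀ i : Fin 4, i ≠ 0 → Γ i = 1 :=
  stmt3_general a b c hexp hc hord2 hord3 hord4 hord5 hord6 hord7 hord8 Γ e1 e2 e3 e4 e5 e6 e7
end

section
/- Let d ≥ 1, let (a_{ij}, b_i) be the coefficients of an explicit s-stage Runge–Kutta method with Σ_i b_i = 1, let φ_2,…,φ_s, φ_{out} : ℝ^d × ℝ → ℝ, fix y ∈ ℝ^d, and assume φ_i(y,h) = O(1) as h → 0⁺ for i = 2,…,s. Then the following are equivalent: (i) for every globally Lipschitz F : ℝ^d → ℝ^d of class C², and for every function u : ℝ → ℝ^d with u(0) = y and u'(t) = F(u(t)) for all t, one has ‖G_F(y,h) − u(h)‖ = O(h²) as h → 0⁺; (ii) φ_{out}(y,h) = 1 + O(h) as h → 0⁺. -/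
open Topology Asymptotics Filter Finset

/-!
If `φ_out = 1 + O(h)`, induction along the explicit stages (with `φ_i = O(1)` and `F` Lipschitz)
gives `Y_i = y + O(h)`, hence `Σ b_j F(Y_j) = F(y) + O(h)` since `Σ b_j = 1`. The exact flow
satisfies `u(h) = y + h F(y) + O(h²)`, so the step error is `(φ_out - 1) h F(y) + O(h²) = O(h²)`.
Conversely, for a constant field `c ≠ 0` the step error is exactly `(φ_out - 1) h c`.
-/

lemma LipschitzWith.isBigO_comp_sub {α E F : Type*} [SeminormedAddCommGroup E]
    [SeminormedAddCommGroup F] {l : Filter α} {f : E → F} {K : NNReal}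
    (hf : LipschitzWith K f) {v : α → E} {x : E} {g : α → ℝ}
    (hv : (fun t => v t - x) =O[l] g) :
    (fun t => f (v t) - f x) =O[l] g :=
  IsBigO.trans (.of_bound K <| .of_forall fun t => by
    simpa only [dist_eq_norm] using hf.dist_le_mul (v t) x) hv

section

variable {α E : Type*} [NormedAddCommGroup E]

lemma isBigO_one_of_sub_isBigO {l : Filter α} {v : α → E} {x : E} {g : α → ℝ}
    (hv : (fun t => v t - x) =O[l] g) (hg : Tendsto g l (𝓝 0)) :
    v =O[l] fun _ => (1 : ℝ) := by
  simpa using ((hv.trans (hg.isBigO_one ℝ)).add (isBigO_const_one ℝ x l))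

variable [NormedSpace ℝ E]

lemma isBigO_sum_smul_sub {ι : Type*} [Fintype ι] {l : Filter α} {b : ι → ℝ}
    (hb : ∑ i, b i = 1) {v : α → ι → E} {x : E} {g : α → ℝ}
    (hv : ∀ i, (fun t => v t i - x) =O[l] g) :
    (fun t => ∑ i, b i • v t i - x) =O[l] g := by
  refine (IsBigO.fun_sum (s := univ) fun i _ => (hv i).const_smul_left (b i)).congr_left
    fun t => ?_
  simp only [Pi.smul_apply, smul_sub, sum_sub_distrib, ← sum_smul, hb, one_smul]

lemma isBigO_smul_const_left_iff {l : Filter α} {f g : α → ℝ} {c : E}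
    (hc : c ≠ 0) : (fun t => f t • c) =O[l] g ↔ f =O[l] g := by
  rw [← isBigO_norm_left]
  simp only [norm_smul, mul_comm _ ‖c‖]
  rw [isBigO_const_mul_left_iff (norm_ne_zero_iff.2 hc), isBigO_norm_left]

theorem isBigO_sq_of_hasDerivWithinAt {g g' : ℝ → E} (h0 : g 0 = 0)
    (hg : ∀ t ∈ Set.Ici (0 : ℝ), HasDerivWithinAt g (g' t) (Set.Ici 0) t)
    (hg' : g' =O[𝓝[≥] 0] fun t => t) : g =O[𝓝[≥] 0] fun t => t ^ 2 := by
  obtain ⟨C, hC, hCg⟩ := hg'.exists_pos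
  obtain ⟨ε, hε, hεC⟩ := mem_nhdsGE_iff_exists_Ico_subset.1 hCg.bound
  refine .of_bound C ?_
  filter_upwards [Ico_mem_nhdsGE hε] with h hh
  have hbound : ∀ t ∈ Set.Icc 0 h, ‖g' t‖ ≤ C * h := fun t ht => by
    have : ‖g' t‖ ≤ C * ‖t‖ := hεC ⟨ht.1, ht.2.trans_lt hh.2⟩
    rw [Real.norm_of_nonneg ht.1] at this
    exact this.trans (by gcongr; exact ht.2)
  have hmvt := (convex_Icc 0 h).norm_image_sub_le_of_norm_hasDerivWithin_le
    (fun t ht => (hg t ht.1).mono Set.Icc_subset_Ici_self) hbound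
    (Set.left_mem_Icc.2 hh.1) (Set.right_mem_Icc.2 hh.1)
  rw [h0, sub_zero, sub_zero, Real.norm_of_nonneg hh.1] at hmvt
  rw [Real.norm_of_nonneg (sq_nonneg h)]
  linarith [show C * h * h = C * h ^ 2 by ring]

theorem LipschitzWith.isBigO_flow_sub_sub_smul {F : E → E} {K : NNReal}
    (hF : LipschitzWith K F) {u : ℝ → E} (hu : ∀ t, HasDerivAt u (F (u t)) t) :
    (fun h => u h - u 0 - h • F (u 0)) =O[𝓝[≥] 0] fun h => h ^ 2 := by
  refine isBigO_sq_of_hasDerivWithinAt (g' := fun t => F (u t) - F (u 0)) (by simp)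
    (fun t _ => ?_) ?_
  · simpa using (((hu t).sub_const (u 0)).fun_sub
      ((hasDerivAt_id t).smul_const (F (u 0)))).hasDerivWithinAt
  · simpa using hF.isBigO_comp_sub ((hu 0).isBigO_sub.mono nhdsWithin_le_nhds)

theorem explicit_stage_sub_isBigO {s : ℕ} {a : Fin s → Fin s → ℝ} {θ : Fin s → ℝ → ℝ}
    (hθ : ∀ i : Fin s, (i : ℕ) ≠ 0 → θ i =O[𝓝[>] 0] fun _ => (1 : ℝ))
    {F : E → E} {K : NNReal} (hF : LipschitzWith K F) {y : E} {Y : ℝ → Fin s → E}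
    (hY : ∀ h : ℝ, 0 < h → ∀ i, Y h i = y + (θ i h * h) •
      ∑ j ∈ univ.filter (fun j => j < i), a i j • F (Y h j))
    (i : Fin s) : (fun h => Y h i - y) =O[𝓝[>] 0] fun h => h := by
  induction i using WellFoundedLT.induction with
  | ind i ih =>
  set S := fun h => ∑ j ∈ univ.filter (fun j => j < i), a i j • F (Y h j)
  have hYS : (fun h => (θ i h * h) • S h) =ᶠ[𝓝[>] 0] fun h => Y h i - y := by
    filter_upwards [self_mem_nhdsWithin] with h hh
    rw [hY h hh i, add_sub_cancel_left]
  by_cases hi : (i : ℕ) = 0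
  · have hS : S = 0 := funext fun h => sum_eq_zero fun j hj => by
      simp [Fin.lt_def, hi] at hj
    refine IsBigO.congr' ?_ hYS EventuallyEq.rfl
    simpa [hS] using isBigO_zero (fun h : ℝ => h) (𝓝[>] 0)
  · have hS : S =O[𝓝[>] 0] fun _ => (1 : ℝ) := IsBigO.fun_sum fun j hj =>
      (isBigO_one_of_sub_isBigO (hF.isBigO_comp_sub (ih j (mem_filter.1 hj).2))
        (tendsto_id.mono_left nhdsWithin_le_nhds)).const_smul_left (a i j)
    refine IsBigO.congr' ?_ hYS EventuallyEq.rfl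
    simpa using ((hθ i hi).mul (isBigO_refl (fun h : ℝ => h) _)).smul hS

theorem geco_step_sub_flow_isBigO_sq {s : ℕ} {a : Fin s → Fin s → ℝ} {b : Fin s → ℝ}
    (hb : ∑ i, b i = 1) {θ : Fin s → ℝ → ℝ} {θout : ℝ → ℝ}
    (hθ : ∀ i : Fin s, (i : ℕ) ≠ 0 → θ i =O[𝓝[>] 0] fun _ => (1 : ℝ))
    (hθout : (fun h => θout h - 1) =O[𝓝[>] 0] fun h => h)
    {F : E → E} {K : NNReal} (hF : LipschitzWith K F)
    {u : ℝ → E} (hu : ∀ t, HasDerivAt u (F (u t)) t) {Y : ℝ → Fin s → E}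
    (hY : ∀ h : ℝ, 0 < h → ∀ i, Y h i = u 0 + (θ i h * h) •
      ∑ j ∈ univ.filter (fun j => j < i), a i j • F (Y h j)) :
    (fun h => (u 0 + (θout h * h) • ∑ j, b j • F (Y h j)) - u h)
      =O[𝓝[>] 0] fun h => h ^ 2 := by
  set S := fun h => ∑ j, b j • F (Y h j)
  have hS : (fun h => S h - F (u 0)) =O[𝓝[>] 0] fun h => h := isBigO_sum_smul_sub hb
    fun j => hF.isBigO_comp_sub (explicit_stage_sub_isBigO hθ hF hY j)
  have hS1 : S =O[𝓝[>] 0] fun _ => (1 : ℝ) :=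
    isBigO_one_of_sub_isBigO hS (tendsto_id.mono_left nhdsWithin_le_nhds)
  have hflow := (hF.isBigO_flow_sub_sub_smul hu).mono (nhdsWithin_mono _ Set.Ioi_subset_Ici_self)
  have hout : (fun h => ((θout h - 1) * h) • S h) =O[𝓝[>] 0] fun h => h ^ 2 := by
    simpa [sq] using (hθout.mul (isBigO_refl (fun h : ℝ => h) _)).smul hS1
  have hstages : (fun h => h • (S h - F (u 0))) =O[𝓝[>] 0] fun h => h ^ 2 := by
    simpa [sq] using (isBigO_refl (fun h : ℝ => h) _).smul hS
  refine ((hout.add hstages).sub hflow).congr_left fun h => ?_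
  module

theorem isBigO_of_mul_smul_const_isBigO_sq {f : ℝ → ℝ} {c : E} (hc : c ≠ 0)
    (hf : (fun h => (f h * h) • c) =O[𝓝[>] 0] fun h => h ^ 2) :
    f =O[𝓝[>] 0] fun h => h := by
  have hmul : (fun h => h * f h) =O[𝓝[>] 0] fun h => h ^ 2 := by
    simpa only [mul_comm, isBigO_smul_const_left_iff hc] using hf
  have hpos : ∀ᶠ h in 𝓝[>] (0 : ℝ), h ≠ 0 := eventually_mem_nhdsWithin.mono fun h hh => hh.ne'
  refine ((isBigO_mul_iff_isBigO_div hpos).1 hmul).congr_right fun h => ?_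
  rcases eq_or_ne h 0 with rfl | h0 <;> field_simp

end

theorem stmt5_general (d s : ℕ) (hd : 1 ≤ d)
    (a : Fin s → Fin s → ℝ) (b : Fin s → ℝ)
    (hb : ∑ i, b i = 1)
    (φ : Fin s → (Fin d → ℝ) → ℝ → ℝ) (φout : (Fin d → ℝ) → ℝ → ℝ)
    (y : Fin d → ℝ)
    (hφ : ∀ i : Fin s, (i : ℕ) ≠ 0 →
      (fun h => φ i y h) =O[𝓝[>] (0 : ℝ)] fun _ => (1 : ℝ)) :
    (∀ F : (Fin d → ℝ) → (Fin d → ℝ), (∃ K, LipschitzWith K F) → ContDiff ℝ 2 F →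
      ∀ u : ℝ → (Fin d → ℝ), u 0 = y → (∀ t, HasDerivAt u (F (u t)) t) →
      ∀ Y : ℝ → Fin s → (Fin d → ℝ),
        (∀ h : ℝ, 0 < h → ∀ i, Y h i = y + (φ i y h * h) •
            ∑ j ∈ Finset.univ.filter (fun j => j < i), a i j • F (Y h j)) →
        (fun h => (y + (φout y h * h) • ∑ j, b j • F (Y h j)) - u h)
          =O[𝓝[>] (0 : ℝ)] fun h => h ^ 2)
    ↔
    (fun h => φout y h - 1) =O[𝓝[>] (0 : ℝ)] fun h => h := by
  constructor
  · intro H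
    set c : Fin d → ℝ := fun _ => 1
    have hc : c ≠ 0 := fun h => one_ne_zero (congrFun h ⟨0, hd⟩)
    have hu (t : ℝ) : HasDerivAt (fun t => y + t • c) c t := by
      simpa using ((hasDerivAt_id t).smul_const c).const_add y
    have hstep := H (fun _ => c) ⟨0, LipschitzWith.const c⟩ contDiff_const _ (by simp) hu
      (fun h i => y + (φ i y h * h) • ∑ j ∈ univ.filter (fun j => j < i), a i j • c)
      fun _ _ _ => rfl
    refine isBigO_of_mul_smul_const_isBigO_sq hc (hstep.congr_left fun h => ?_)
    rw [← sum_smul, hb, one_smul]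
    module
  · rintro hout F ⟨K, hF⟩ - u rfl hu Y hY
    exact geco_step_sub_flow_isBigO_sq hb hφ hout hF hu hY

/-- GeCo order-1 characterization: for an explicit s-stage RK method with
Σ bᵢ = 1, the GeCo scheme is of order (at least) 1 at the state y if and only
if φ_out(y,h) = 1 + O(h).  The stages Y are uniquely determined by the
(explicit) stage equations, so we quantify universally over families of
stages satisfying them. -/
theorem stmt5 (d s : ℕ) (hd : 1 ≤ d)
    (a : Fin s → Fin s → ℝ) (b : Fin s → ℝ)
    (hexp : ∀ i j : Fin s, i ≤ j → a i j = 0)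
    (hb : ∑ i, b i = 1)
    (φ : Fin s → (Fin d → ℝ) → ℝ → ℝ) (φout : (Fin d → ℝ) → ℝ → ℝ)
    (y : Fin d → ℝ)
    (hφ : ∀ i : Fin s, (i : ℕ) ≠ 0 →
      (fun h => φ i y h) =O[𝓝[>] (0 : ℝ)] fun _ => (1 : ℝ)) :
    (∀ F : (Fin d → ℝ) → (Fin d → ℝ), (∃ K, LipschitzWith K F) → ContDiff ℝ 2 F →
      ∀ u : ℝ → (Fin d → ℝ), u 0 = y → (∀ t, HasDerivAt u (F (u t)) t) →
      ∀ Y : ℝ → Fin s → (Fin d → ℝ),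
        (∀ h : ℝ, 0 < h → ∀ i, Y h i = y + (φ i y h * h) •
            ∑ j ∈ Finset.univ.filter (fun j => j < i), a i j • F (Y h j)) →
        (fun h => (y + (φout y h * h) • ∑ j, b j • F (Y h j)) - u h)
          =O[𝓝[>] (0 : ℝ)] fun h => h ^ 2)
    ↔
    (fun h => φout y h - 1) =O[𝓝[>] (0 : ℝ)] fun h => h :=
  stmt5_general d s hd a b hb φ φout y hφ
end

section
/- Let d ≥ 1, let (a_{ij}, b_i) be the coefficients of an explicit 2-stage Runge–Kutta method of order 2 (i.e. b₁ + b₂ = 1 and b₂c₂ = 1/2 with c₂ = a₂₁), let φ₂, φ_{out} : ℝ^d × ℝ → ℝ, fix y ∈ ℝ^d, and assume φ₂(y,h) = O(1) as h → 0⁺. Then the following are equivalent: (i) for every globally Lipschitz F : ℝ^d → ℝ^d of class C³, and for every function u : ℝ → ℝ^d with u(0) = y and u'(t) = F(u(t)) for all t, one has ‖G_F(y,h) − u(h)‖ = O(h³) as h → 0⁺; (ii) φ₂(y,h) = 1 + O(h) and φ_{out}(y,h) = 1 + O(h²) as h → 0⁺. -/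
/-!
Substituting the stages and expanding `F` at `y` and the exact solution `u` at `0` to second
order, the GeCo step differs from `u h` by
`(φout - 1) h F(y) + (φout φ₂ - 1) (h² / 2) F'(y) F(y)` up to `O(h³)`, as soon as `φ₂` and
`φout` are bounded: the conditions `b₁ + b₂ = 1` and `b₂ c₂ = 1 / 2` cancel all other terms of
order at most two. Sufficiency follows at once. Conversely, the constant field `F ≡ v` isolates
the first term and forces `φout = 1 + O(h²)`; the translation field `F x = x + (v - y)`, for
which `F'(y) F(y) = F(y) = v`, then forces `φout φ₂ = 1 + O(h)`, hence `φ₂ = 1 + O(h)` because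
`φ₂` is bounded.
-/

open Topology Asymptotics Filter Finset Set

namespace Asymptotics

theorem IsBigO.of_mul_right {α : Type*} {l : Filter α} {f g k : α → ℝ}
    (hk : ∀ᶠ x in l, k x ≠ 0) (h : (fun x => f x * k x) =O[l] fun x => g x * k x) :
    f =O[l] g := by
  refine (h.mul (isBigO_refl (fun x => (k x)⁻¹) l)).congr' ?_ ?_ <;>
    filter_upwards [hk] with x hx <;> field_simp

theorem isBigO_smul_const_iff {α 𝕜 E F : Type*} [NormedField 𝕜] [NormedAddCommGroup E]
    [NormedSpace 𝕜 E] [Norm F] {l : Filter α} {f : α → 𝕜} {g : α → F} {v : E} (hv : v ≠ 0) :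
    (fun x => f x • v) =O[l] g ↔ f =O[l] g := by
  rw [← isBigO_norm_left]
  simp_rw [norm_smul, mul_comm _ ‖v‖]
  rw [isBigO_const_mul_left_iff (norm_ne_zero_iff.2 hv), isBigO_norm_left]

theorem IsBigO.smul_const {α 𝕜 E F : Type*} [NormedField 𝕜] [NormedAddCommGroup E]
    [NormedSpace 𝕜 E] [Norm F] {l : Filter α} {f : α → 𝕜} {g : α → F} (h : f =O[l] g) (v : E) :
    (fun x => f x • v) =O[l] g := by
  rcases eq_or_ne v 0 with rfl | hv
  · simpa using isBigO_zero g l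
  · exact (isBigO_smul_const_iff hv).2 h

end Asymptotics

theorem isBigO_one_of_sub_one_isBigO {α : Type*} {l : Filter α} {p g : α → ℝ}
    (hp : (fun x => p x - 1) =O[l] g) (hg : g =O[l] fun _ => (1 : ℝ)) :
    p =O[l] fun _ => (1 : ℝ) :=
  ((hp.trans hg).add (isBigO_refl (fun _ => (1 : ℝ)) l)).congr_left fun x => by ring

theorem isBigO_mul_sub_one_iff {α : Type*} {l : Filter α} {p q g : α → ℝ}
    (hp : p =O[l] fun _ => (1 : ℝ)) (hq : (fun x => q x - 1) =O[l] g)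
    (hg : g =O[l] fun _ => (1 : ℝ)) :
    (fun x => q x * p x - 1) =O[l] g ↔ (fun x => p x - 1) =O[l] g := by
  constructor
  · intro h
    have hpq : (fun x => p x * -(q x - 1)) =O[l] g :=
      (hp.mul hq.neg_left).congr_right fun x => one_mul _
    exact (hpq.add h).congr_left fun x => by ring
  · intro h
    have hqp : (fun x => q x * (p x - 1)) =O[l] g :=
      ((isBigO_one_of_sub_one_isBigO hq hg).mul h).congr_right fun x => one_mul _
    exact (hqp.add hq).congr_left fun x => by ring

theorem isBigO_id_one : (fun h : ℝ => h) =O[𝓝[>] 0] fun _ => (1 : ℝ) :=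
  (tendsto_nhdsWithin_of_tendsto_nhds tendsto_id).isBigO_one ℝ

theorem isBigO_sq_id : (fun h : ℝ => h ^ 2) =O[𝓝[>] 0] fun h => h :=
  ((isLittleO_pow_pow one_lt_two).isBigO.mono nhdsWithin_le_nhds).congr_right fun _ => pow_one _

section Taylor

variable {E E' : Type*} [NormedAddCommGroup E] [NormedSpace ℝ E]
  [NormedAddCommGroup E'] [NormedSpace ℝ E']

theorem isBigO_pow_succ_of_hasDerivAt {f f' : ℝ → E} {n : ℕ} (hf0 : f 0 = 0)
    (hf : ∀ t, HasDerivAt f (f' t) t) (hf' : f' =O[𝓝[≥] 0] fun t => t ^ n) :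
    f =O[𝓝[≥] 0] fun t => t ^ (n + 1) := by
  obtain ⟨C, hC, hCf⟩ := hf'.exists_nonneg
  obtain ⟨δ, hδ, hδf⟩ := mem_nhdsGE_iff_exists_Ico_subset.1 hCf.bound
  refine IsBigO.of_bound C ?_
  filter_upwards [Ico_mem_nhdsGE hδ] with t ht
  have hbound : ∀ s ∈ Ico 0 t, ‖f' s‖ ≤ C * t ^ n := fun s hs => by
    calc ‖f' s‖ ≤ C * ‖s ^ n‖ := hδf ⟨hs.1, hs.2.trans ht.2⟩
      _ ≤ C * t ^ n := by
        rw [norm_pow, Real.norm_of_nonneg hs.1]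
        gcongr
        exacts [hs.1, hs.2.le]
  have hmvt := norm_image_sub_le_of_norm_deriv_le_segment' (fun s _ => (hf s).hasDerivWithinAt)
    hbound t (right_mem_Icc.2 ht.1)
  rw [hf0, sub_zero, sub_zero] at hmvt
  rwa [norm_pow, Real.norm_of_nonneg ht.1, pow_succ, ← mul_assoc]

theorem isBigO_sub_taylor_two_of_hasDerivAt {F : E → E} (hF : ContDiff ℝ 2 F) {u : ℝ → E}
    (hu : ∀ t, HasDerivAt u (F (u t)) t) :
    (fun t => u t - u 0 - t • F (u 0) - (t ^ 2 / 2) • fderiv ℝ F (u 0) (F (u 0)))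
      =O[𝓝[≥] 0] fun t => t ^ 3 := by
  set w : ℝ → E := fun t => fderiv ℝ F (u t) (F (u t))
  have hFu : ∀ t, HasDerivAt (fun t => F (u t)) (w t) t := fun t =>
    ((hF.differentiable two_ne_zero) (u t)).hasFDerivAt.comp_hasDerivAt t (hu t)
  have hw : DifferentiableAt ℝ w 0 :=
    (((hF.fderiv_right (m := 1) le_rfl).differentiable one_ne_zero).differentiableAt.comp 0
      (hu 0).differentiableAt).clm_apply (hFu 0).differentiableAt
  have hw' : (fun t => w t - w 0) =O[𝓝[≥] 0] fun t => t ^ 1 :=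
    (hw.hasDerivAt.isBigO_sub.mono nhdsWithin_le_nhds).congr_right fun t => by simp
  have hFu' := isBigO_pow_succ_of_hasDerivAt (f := fun t => F (u t) - F (u 0) - t • w 0)
    (by simp) (fun t => ((hFu t).sub_const _).sub
      (by simpa using (hasDerivAt_id t).smul_const (w 0))) hw'
  refine isBigO_pow_succ_of_hasDerivAt (by simp) (fun t => ?_) hFu'
  have hsq : HasDerivAt (fun t : ℝ => (t ^ 2 / 2) • w 0) (t • w 0) t := by
    convert ((hasDerivAt_pow 2 t).div_const 2).smul_const (w 0) using 2; ring
  exact (((hu t).sub_const _).sub (by simpa using (hasDerivAt_id t).smul_const (F (u 0)))).sub hsq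

theorem ContDiffAt.isBigO_sub_sub_fderiv {F : E → E'} {y : E} (hF : ContDiffAt ℝ 2 F y) :
    (fun v => F (y + v) - F y - fderiv ℝ F y v) =O[𝓝 0] fun v => ‖v‖ ^ 2 := by
  have hdiff : ∀ᶠ x in 𝓝 y, DifferentiableAt ℝ F x :=
    (hF.eventually (by simp)).mono fun x hx => hx.differentiableAt two_ne_zero
  obtain ⟨C, hC, hCF⟩ := ((hF.fderiv_right (m := 1) le_rfl).differentiableAt
    one_ne_zero).hasFDerivAt.isBigO_sub.exists_nonneg
  obtain ⟨r, hr, hball⟩ := Metric.eventually_nhds_iff_ball.1 (hdiff.and hCF.bound)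
  refine IsBigO.of_bound C ?_
  filter_upwards [Metric.ball_mem_nhds 0 hr] with v hv
  rw [mem_ball_zero_iff] at hv
  have hsub : Metric.closedBall y ‖v‖ ⊆ Metric.ball y r := Metric.closedBall_subset_ball hv
  have key := (convex_closedBall y ‖v‖).norm_image_sub_le_of_norm_hasFDerivWithin_le'
    (fun x hx => (hball x (hsub hx)).1.hasFDerivAt.hasFDerivWithinAt)
    (fun x hx => (hball x (hsub hx)).2.trans
      (mul_le_mul_of_nonneg_left (by simpa [dist_eq_norm] using hx) hC))
    (Metric.mem_closedBall_self (norm_nonneg v)) (y := y + v) (by simp [dist_eq_norm])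
  rw [add_sub_cancel_left] at key
  rwa [norm_pow, norm_norm, sq, ← mul_assoc]

end Taylor

section GeCo

variable {E : Type*} [NormedAddCommGroup E] [NormedSpace ℝ E]

/-- The GeCo step `G_F(y, h)` of a two-stage explicit method with the stages substituted
(`Y₁ = y`, `Y₂ = y + φ₂ h c F(y)`); `c = a₂₁`. -/
def gecoStep₂ (F : E → E) (b : Fin 2 → ℝ) (c : ℝ) (φ₂ φout : ℝ → ℝ) (y : E) (h : ℝ) : E :=
  y + (φout h * h) • (b 0 • F y + b 1 • F (y + (φ₂ h * h * c) • F y))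

theorem gecoStep₂_sub_eq (F : E → E) (L : E →L[ℝ] E) {b : Fin 2 → ℝ} {c : ℝ}
    (φ₂ φout : ℝ → ℝ) (y U : E) (h : ℝ) (hb : b 0 + b 1 = 1) (hc : b 1 * c = 1 / 2) :
    gecoStep₂ F b c φ₂ φout y h - U =
      ((φout h - 1) * h) • F y + ((φout h * φ₂ h - 1) * (h ^ 2 / 2)) • L (F y)
        + (φout h * h * b 1) • (F (y + (φ₂ h * h * c) • F y) - F y - (φ₂ h * h * c) • L (F y))
        - (U - y - h • F y - (h ^ 2 / 2) • L (F y)) := by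
  rw [gecoStep₂]
  match_scalars <;> first
    | ring1
    | linear_combination (φout h * h) * hb
    | linear_combination (φout h * φ₂ h * h ^ 2) * hc

theorem isBigO_gecoStep₂_sub_sub_leading {F : E → E} (hF : ContDiff ℝ 2 F) {u : ℝ → E} {y : E}
    (hu0 : u 0 = y) (hu : ∀ t, HasDerivAt u (F (u t)) t) {b : Fin 2 → ℝ} {c : ℝ}
    {φ₂ φout : ℝ → ℝ} (hb : b 0 + b 1 = 1) (hc : b 1 * c = 1 / 2)
    (hφ₂ : φ₂ =O[𝓝[>] 0] fun _ => (1 : ℝ)) (hφout : φout =O[𝓝[>] 0] fun _ => (1 : ℝ)) :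
    (fun h => gecoStep₂ F b c φ₂ φout y h - u h
        - (((φout h - 1) * h) • F y + ((φout h * φ₂ h - 1) * (h ^ 2 / 2)) • fderiv ℝ F y (F y)))
      =O[𝓝[>] 0] fun h => h ^ 3 := by
  have hid : (fun h : ℝ => h) =O[𝓝[>] 0] fun h => h := isBigO_refl _ _
  have hs : (fun h => (φ₂ h * h * c) • F y) =O[𝓝[>] 0] fun h => h :=
    (((hφ₂.mul hid).mul (isBigO_const_const c one_ne_zero _)).congr_right
      fun h => by ring).smul_const (F y)
  have hR1 : (fun h => F (y + (φ₂ h * h * c) • F y) - F y - (φ₂ h * h * c) • fderiv ℝ F y (F y))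
      =O[𝓝[>] 0] fun h => h ^ 2 := by
    have htend := hs.trans_tendsto (tendsto_nhdsWithin_of_tendsto_nhds tendsto_id)
    simpa only [Function.comp_def, map_smul, norm_pow, norm_norm] using
      (hF.contDiffAt.isBigO_sub_sub_fderiv.comp_tendsto htend).trans (hs.norm_left.pow 2)
  have hR2 : (fun h => u h - y - h • F y - (h ^ 2 / 2) • fderiv ℝ F y (F y))
      =O[𝓝[>] 0] fun h => h ^ 3 := by
    simpa only [hu0] using
      (isBigO_sub_taylor_two_of_hasDerivAt hF hu).mono (nhdsWithin_mono _ Ioi_subset_Ici_self)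
  have hβ : (fun h => φout h * h * b 1) =O[𝓝[>] 0] fun h => h :=
    ((hφout.mul hid).mul (isBigO_const_const (b 1) one_ne_zero _)).congr_right fun h => by ring
  have hβR1 := (hβ.smul hR1).congr_right (g₂ := fun h => h ^ 3) fun h => by
    rw [smul_eq_mul]; ring
  refine (hβR1.sub hR2).congr_left fun h => ?_
  rw [gecoStep₂_sub_eq F (fderiv ℝ F y) φ₂ φout y (u h) h hb hc]
  abel

def GecoHasOrderTwoAt (b : Fin 2 → ℝ) (c : ℝ) (φ₂ φout : ℝ → ℝ) (y : E) : Prop :=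
  ∀ F : E → E, (∃ K, LipschitzWith K F) → ContDiff ℝ 3 F → ∀ u : ℝ → E, u 0 = y →
    (∀ t, HasDerivAt u (F (u t)) t) →
    (fun h => gecoStep₂ F b c φ₂ φout y h - u h) =O[𝓝[>] 0] fun h => h ^ 3

namespace GecoHasOrderTwoAt

variable {b : Fin 2 → ℝ} {c : ℝ} {φ₂ φout : ℝ → ℝ} {y : E}

theorem isBigO_phiOut_sub_one (H : GecoHasOrderTwoAt b c φ₂ φout y) {v : E} (hv : v ≠ 0)
    (hb : b 0 + b 1 = 1) : (fun h => φout h - 1) =O[𝓝[>] 0] fun h => h ^ 2 := by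
  have hu : ∀ t : ℝ, HasDerivAt (fun t => y + t • v) v t := fun t => by
    simpa using ((hasDerivAt_id t).smul_const v).const_add y
  have hdefect : ∀ h, gecoStep₂ (fun _ => v) b c φ₂ φout y h - (y + h • v)
      = ((φout h - 1) * h) • v := fun h => by
    rw [gecoStep₂, ← add_smul, hb, one_smul]
    module
  have H' := (H _ ⟨0, LipschitzWith.const v⟩ contDiff_const _ (by simp) hu).congr_left hdefect
  refine IsBigO.of_mul_right (k := fun h => h)
    (eventually_nhdsWithin_of_forall fun h (hh : 0 < h) => hh.ne') ?_
  exact ((isBigO_smul_const_iff hv).1 H').congr_right fun h => by ring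

theorem isBigO_phiOut_mul_sub_one (H : GecoHasOrderTwoAt b c φ₂ φout y) {v : E} (hv : v ≠ 0)
    (hb : b 0 + b 1 = 1) (hc : b 1 * c = 1 / 2) (hφ₂ : φ₂ =O[𝓝[>] 0] fun _ => (1 : ℝ)) :
    (fun h => φout h * φ₂ h - 1) =O[𝓝[>] 0] fun h => h := by
  have hout := H.isBigO_phiOut_sub_one hv hb
  set F : E → E := fun x => x + (v - y)
  set u : ℝ → E := fun t => y + (Real.exp t - 1) • v
  have hF : ContDiff ℝ 3 F := contDiff_id.add contDiff_const
  have hu : ∀ t, HasDerivAt u (F (u t)) t := fun t => by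
    convert (((Real.hasDerivAt_exp t).sub_const 1).smul_const v).const_add y using 1
    simp only [F, u]
    module
  have hu0 : u 0 = y := by simp [u]
  have hlead := isBigO_gecoStep₂_sub_sub_leading (hF.of_le (by norm_num)) hu0 hu hb hc hφ₂
    (isBigO_one_of_sub_one_isBigO hout (isBigO_sq_id.trans isBigO_id_one))
  have hFy : F y = v := by simp [F]
  have hF' : fderiv ℝ F y = ContinuousLinearMap.id ℝ E := by
    simp [F, fderiv_add_const]
  rw [hFy, hF', ContinuousLinearMap.id_apply] at hlead
  have hT1 : (fun h => ((φout h - 1) * h) • v) =O[𝓝[>] 0] fun h => h ^ 3 :=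
    ((hout.mul (isBigO_refl (fun h => h) _)).congr_right fun h => by ring).smul_const v
  have hdefect := H F ⟨1, (isometry_add_right (v - y)).lipschitz⟩ hF u hu0 hu
  have hT2 : (fun h => ((φout h * φ₂ h - 1) * (h ^ 2 / 2)) • v) =O[𝓝[>] 0] fun h => h ^ 3 :=
    ((hdefect.sub hlead).sub hT1).congr_left fun h => by abel
  refine IsBigO.of_mul_right (k := fun h => h ^ 2)
    (eventually_nhdsWithin_of_forall fun h (hh : 0 < h) => by positivity) ?_
  exact (((isBigO_smul_const_iff hv).1 hT2).const_mul_left 2).congr (fun h => by ring)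
    fun h => by ring

end GecoHasOrderTwoAt

theorem gecoHasOrderTwoAt_iff [Nontrivial E] {b : Fin 2 → ℝ} {c : ℝ} {φ₂ φout : ℝ → ℝ} {y : E}
    (hb : b 0 + b 1 = 1) (hc : b 1 * c = 1 / 2) (hφ₂ : φ₂ =O[𝓝[>] 0] fun _ => (1 : ℝ)) :
    GecoHasOrderTwoAt b c φ₂ φout y ↔
      ((fun h => φ₂ h - 1) =O[𝓝[>] 0] fun h => h) ∧
        ((fun h => φout h - 1) =O[𝓝[>] 0] fun h => h ^ 2) := by
  constructor
  · intro H
    obtain ⟨v, hv⟩ := exists_ne (0 : E)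
    have hout := H.isBigO_phiOut_sub_one hv hb
    refine ⟨?_, hout⟩
    exact (isBigO_mul_sub_one_iff hφ₂ (hout.trans isBigO_sq_id) isBigO_id_one).1
      (H.isBigO_phiOut_mul_sub_one hv hb hc hφ₂)
  · rintro ⟨h₂, hout⟩ F - hF u hu0 hu
    have hmul := (isBigO_mul_sub_one_iff hφ₂ (hout.trans isBigO_sq_id) isBigO_id_one).2 h₂
    have hT1 : (fun h => ((φout h - 1) * h) • F y) =O[𝓝[>] 0] fun h => h ^ 3 :=
      ((hout.mul (isBigO_refl (fun h => h) _)).congr_right fun h => by ring).smul_const _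
    have hT2 : (fun h => ((φout h * φ₂ h - 1) * (h ^ 2 / 2)) • fderiv ℝ F y (F y))
        =O[𝓝[>] 0] fun h => h ^ 3 :=
      (((hmul.mul (isBigO_refl (fun h => h ^ 2) _)).const_mul_left (1 / 2)).congr
        (fun h => by ring) fun h => by ring).smul_const _
    have hrest := isBigO_gecoStep₂_sub_sub_leading (hF.of_le (by norm_num)) hu0 hu hb hc hφ₂
      (isBigO_one_of_sub_one_isBigO hout (isBigO_sq_id.trans isBigO_id_one))
    exact (hrest.add (hT1.add hT2)).congr_left fun h => sub_add_cancel _ _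

theorem eq_gecoStep₂_of_stages {F : E → E} {a : Fin 2 → Fin 2 → ℝ} {b : Fin 2 → ℝ}
    {φ : Fin 2 → ℝ → ℝ} {φout : ℝ → ℝ} {y : E} {h : ℝ} {Y : Fin 2 → E}
    (hY : ∀ i, Y i = y + (φ i h * h) • ∑ j ∈ univ.filter (· < i), a i j • F (Y j)) :
    y + (φout h * h) • ∑ j, b j • F (Y j) = gecoStep₂ F b (a 1 0) (φ 1) φout y h := by
  have hY0 : Y 0 = y := by simpa using hY 0
  have hY1 : Y 1 = y + (φ 1 h * h * a 1 0) • F y := by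
    rw [hY 1, show univ.filter (· < (1 : Fin 2)) = {0} by decide, sum_singleton, hY0, smul_smul]
  rw [gecoStep₂, Fin.sum_univ_two, hY0, hY1]

theorem exists_explicit_stages (F : E → E) (a : Fin 2 → Fin 2 → ℝ) (φ : Fin 2 → ℝ → ℝ) (y : E) :
    ∃ Y : ℝ → Fin 2 → E,
      ∀ h i, Y h i = y + (φ i h * h) • ∑ j ∈ univ.filter (· < i), a i j • F (Y h j) := by
  refine ⟨fun h => ![y, y + (φ 1 h * h) • (a 1 0 • F y)], fun h i => ?_⟩
  fin_cases i
  · simp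
  · simp [Finset.filter_eq']

theorem forall_stages_isBigO_iff {F : E → E} {a : Fin 2 → Fin 2 → ℝ} {b : Fin 2 → ℝ}
    {φ : Fin 2 → ℝ → ℝ} {φout : ℝ → ℝ} {y : E} {u : ℝ → E} :
    (∀ Y : ℝ → Fin 2 → E,
      (∀ h : ℝ, 0 < h → ∀ i, Y h i = y + (φ i h * h) •
        ∑ j ∈ univ.filter (fun j => j < i), a i j • F (Y h j)) →
      (fun h => (y + (φout h * h) • ∑ j, b j • F (Y h j)) - u h) =O[𝓝[>] (0 : ℝ)]
        fun h => h ^ 3) ↔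
    (fun h => gecoStep₂ F b (a 1 0) (φ 1) φout y h - u h) =O[𝓝[>] 0] fun h => h ^ 3 := by
  constructor
  · intro H
    obtain ⟨Y, hY⟩ := exists_explicit_stages F a φ y
    exact (H Y fun h _ => hY h).congr_left fun h => by rw [eq_gecoStep₂_of_stages (hY h)]
  · intro H Y hY
    refine H.congr' (eventually_nhdsWithin_of_forall fun h hh => ?_) EventuallyEq.rfl
    dsimp only
    rw [eq_gecoStep₂_of_stages (hY h hh)]

end GeCo

theorem stmt6_general (d : ℕ) (hd : 1 ≤ d)
    (a : Fin 2 → Fin 2 → ℝ) (b : Fin 2 → ℝ)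
    (hb : b 0 + b 1 = 1)
    (hord2 : b 1 * a 1 0 = 1 / 2)
    (φ : Fin 2 → (Fin d → ℝ) → ℝ → ℝ) (φout : (Fin d → ℝ) → ℝ → ℝ)
    (y : Fin d → ℝ)
    (hφ : (fun h => φ 1 y h) =O[𝓝[>] (0 : ℝ)] fun _ => (1 : ℝ)) :
    (∀ F : (Fin d → ℝ) → (Fin d → ℝ), (∃ K, LipschitzWith K F) → ContDiff ℝ 3 F →
      ∀ u : ℝ → (Fin d → ℝ), u 0 = y → (∀ t, HasDerivAt u (F (u t)) t) →
      ∀ Y : ℝ → Fin 2 → (Fin d → ℝ),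
        (∀ h : ℝ, 0 < h → ∀ i, Y h i = y + (φ i y h * h) •
            ∑ j ∈ Finset.univ.filter (fun j => j < i), a i j • F (Y h j)) →
        (fun h => (y + (φout y h * h) • ∑ j, b j • F (Y h j)) - u h)
          =O[𝓝[>] (0 : ℝ)] fun h => h ^ 3)
    ↔
    (((fun h => φ 1 y h - 1) =O[𝓝[>] (0 : ℝ)] fun h => h) ∧
     ((fun h => φout y h - 1) =O[𝓝[>] (0 : ℝ)] fun h => h ^ 2)) := by
  have : Nonempty (Fin d) := ⟨⟨0, hd⟩⟩
  simp only [forall_stages_isBigO_iff]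
  exact gecoHasOrderTwoAt_iff hb hord2 hφ

/-- GeCo order-2 characterization: for an explicit 2-stage RK method of
order 2, the GeCo scheme is of order (at least) 2 at the state y if and only
if φ₂(y,h) = 1 + O(h) and φ_out(y,h) = 1 + O(h²).  Here `φ 1` plays the role
of φ₂ (stage indices are 0-based). -/
theorem stmt6 (d : ℕ) (hd : 1 ≤ d)
    (a : Fin 2 → Fin 2 → ℝ) (b : Fin 2 → ℝ)
    (hexp : ∀ i j : Fin 2, i ≤ j → a i j = 0)
    (hb : b 0 + b 1 = 1)
    (hord2 : b 1 * a 1 0 = 1 / 2)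
    (φ : Fin 2 → (Fin d → ℝ) → ℝ → ℝ) (φout : (Fin d → ℝ) → ℝ → ℝ)
    (y : Fin d → ℝ)
    (hφ : (fun h => φ 1 y h) =O[𝓝[>] (0 : ℝ)] fun _ => (1 : ℝ)) :
    (∀ F : (Fin d → ℝ) → (Fin d → ℝ), (∃ K, LipschitzWith K F) → ContDiff ℝ 3 F →
      ∀ u : ℝ → (Fin d → ℝ), u 0 = y → (∀ t, HasDerivAt u (F (u t)) t) →
      ∀ Y : ℝ → Fin 2 → (Fin d → ℝ),
        (∀ h : ℝ, 0 < h → ∀ i, Y h i = y + (φ i y h * h) •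
            ∑ j ∈ Finset.univ.filter (fun j => j < i), a i j • F (Y h j)) →
        (fun h => (y + (φout y h * h) • ∑ j, b j • F (Y h j)) - u h)
          =O[𝓝[>] (0 : ℝ)] fun h => h ^ 3)
    ↔
    (((fun h => φ 1 y h - 1) =O[𝓝[>] (0 : ℝ)] fun h => h) ∧
     ((fun h => φout y h - 1) =O[𝓝[>] (0 : ℝ)] fun h => h ^ 2)) :=
  stmt6_general d hd a b hb hord2 φ φout y hφ
end

section
/- Consider an absolutely conservative production–destruction system with continuous nonnegative functions p_{mν}, d_{mν}, an explicit s-stage Runge–Kutta scheme with nonnegative coefficients a_{ij} (a_{ij} = 0 for j ≥ i) and nonnegative weights b_j, a state y^n ∈ ℝ^N with all entries positive, and any step size h ≥ 0. Then: (1) for each i = 2,…,s, given any positive numbers ρ_{iν} (ν = 1,…,N) and any previously determined stage vectors y^{(1)},…,y^{(i−1)} with positive entries, the i-th MPRK stage equation has a unique solution y^{(i)} ∈ ℝ^N; this solution has positive entries and satisfies the conservation identity Σ_{m=1}^N y^{(i)}_m = Σ_{m=1}^N y^n_m; (2) likewise, given any positive numbers σ_ν and stage vectors with positive entries, the MPRK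 update equation has a unique solution y^{n+1} ∈ ℝ^N, which has positive entries and satisfies Σ_{m=1}^N y^{n+1}_m = Σ_{m=1}^N y^n_m. -/
/-!
Since the Patankar weights make every term linear in the unknown `z`, each MPRK equation is a
linear system `(I + diag D - P) z = yⁿ` with `P ≥ 0`, and absolute conservativity says precisely
that `D` is the vector of column sums of `P`. Every column of this matrix then sums to one, which
gives conservation. If the right-hand side is nonnegative, the negative part `u` of a solution
satisfies `(I + diag D - P) u ≤ 0`, so summing, `∑ u ≤ 0` and `u = 0`. Thus the matrix is
injective, hence invertible, and the solution is positive because `yⁿ` is.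
-/

open Finset Matrix

section PatankarMatrix

variable {ι : Type*} [Fintype ι] [DecidableEq ι]

def patankarMatrix (P : Matrix ι ι ℝ) : Matrix ι ι ℝ :=
  diagonal (fun m => 1 + ∑ μ, P μ m) - P

variable {P : Matrix ι ι ℝ}

lemma patankarMatrix_mulVec_apply (z : ι → ℝ) (m : ι) :
    (patankarMatrix P *ᵥ z) m = (1 + ∑ μ, P μ m) * z m - ∑ ν, P m ν * z ν := by
  simp only [patankarMatrix, sub_mulVec, Pi.sub_apply, mulVec_diagonal]
  rfl

lemma sum_patankarMatrix_mulVec (z : ι → ℝ) : ∑ m, (patankarMatrix P *ᵥ z) m = ∑ m, z m := by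
  simp only [patankarMatrix_mulVec_apply, sum_sub_distrib, add_mul, one_mul, sum_add_distrib,
    sum_mul]
  rw [sum_comm (f := fun m ν => P m ν * z ν), add_sub_cancel_right]

lemma eq_zero_of_nonneg_of_patankarMatrix_mulVec_nonpos {u : ι → ℝ} (hu : 0 ≤ u)
    (hMu : patankarMatrix P *ᵥ u ≤ 0) : u = 0 := by
  have hsum : ∑ m, u m = 0 :=
    le_antisymm (sum_patankarMatrix_mulVec (P := P) u ▸ sum_nonpos fun m _ => hMu m)
      (sum_nonneg fun m _ => hu m)
  funext m
  exact (sum_eq_zero_iff_of_nonneg fun m _ => hu m).mp hsum m (mem_univ m)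

lemma nonneg_of_patankarMatrix_mulVec_nonneg (hP : ∀ m ν, 0 ≤ P m ν) {z : ι → ℝ}
    (hMz : 0 ≤ patankarMatrix P *ᵥ z) : 0 ≤ z := by
  set u : ι → ℝ := fun m => (z m)⁻
  have hPu : ∀ m, 0 ≤ ∑ ν, P m ν * u ν := fun m =>
    sum_nonneg fun ν _ => mul_nonneg (hP m ν) (negPart_nonneg _)
  have hMu : patankarMatrix P *ᵥ u ≤ 0 := by
    intro m
    rw [patankarMatrix_mulVec_apply]
    rcases le_or_gt 0 (z m) with hzm | hzm
    · simp only [u, negPart_of_nonneg hzm, mul_zero, zero_sub, Pi.zero_apply, neg_nonpos]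
      exact hPu m
    · have hle : -∑ ν, P m ν * z ν ≤ ∑ ν, P m ν * u ν := by
        rw [← sum_neg_distrib]
        exact sum_le_sum fun ν _ => by
          rw [← mul_neg]; exact mul_le_mul_of_nonneg_left (neg_le_negPart _) (hP m ν)
      have hMzm := hMz m
      rw [Pi.zero_apply, patankarMatrix_mulVec_apply] at hMzm
      rw [Pi.zero_apply, show u m = -z m from negPart_of_nonpos hzm.le, mul_neg]
      linarith
  have hu0 : u = 0 :=
    eq_zero_of_nonneg_of_patankarMatrix_mulVec_nonpos (fun m => negPart_nonneg (z m)) hMu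
  exact fun m => negPart_eq_zero.mp (congrFun hu0 m)

lemma patankarMatrix_mulVec_injective (hP : ∀ m ν, 0 ≤ P m ν) :
    Function.Injective (patankarMatrix P *ᵥ ·) := by
  intro z z' hzz'
  have hzero : patankarMatrix P *ᵥ (z - z') = 0 := by
    simp only [mulVec_sub, hzz', sub_self]
  have hle : 0 ≤ z - z' := nonneg_of_patankarMatrix_mulVec_nonneg hP hzero.ge
  have hge : 0 ≤ -(z - z') :=
    nonneg_of_patankarMatrix_mulVec_nonneg hP (by rw [mulVec_neg, hzero, neg_zero])
  exact sub_eq_zero.mp (le_antisymm (neg_nonneg.mp hge) hle)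

lemma isUnit_patankarMatrix (hP : ∀ m ν, 0 ≤ P m ν) : IsUnit (patankarMatrix P) :=
  mulVec_injective_iff_isUnit.mp (patankarMatrix_mulVec_injective hP)

lemma pos_of_patankarMatrix_mulVec_pos (hP : ∀ m ν, 0 ≤ P m ν) {z : ι → ℝ}
    (hMz : ∀ m, 0 < (patankarMatrix P *ᵥ z) m) (m : ι) : 0 < z m := by
  have hz : 0 ≤ z := nonneg_of_patankarMatrix_mulVec_nonneg hP fun m => (hMz m).le
  have hPz : 0 ≤ ∑ ν, P m ν * z ν := sum_nonneg fun ν _ => mul_nonneg (hP m ν) (hz ν)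
  have hD : 0 ≤ ∑ μ, P μ m := sum_nonneg fun μ _ => hP μ m
  have hMzm := hMz m
  rw [patankarMatrix_mulVec_apply] at hMzm
  exact pos_of_mul_pos_right (a := 1 + ∑ μ, P μ m) (by linarith) (by linarith)

theorem patankarMatrix_mulVec_eq_pos (hP : ∀ m ν, 0 ≤ P m ν) {c : ι → ℝ} (hc : ∀ m, 0 < c m) :
    (∃! z, patankarMatrix P *ᵥ z = c) ∧
      ∀ z, patankarMatrix P *ᵥ z = c → (∀ m, 0 < z m) ∧ ∑ m, z m = ∑ m, c m := by
  have hbij : Function.Bijective (patankarMatrix P *ᵥ ·) :=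
    ⟨patankarMatrix_mulVec_injective hP,
      mulVec_surjective_iff_isUnit.mpr (isUnit_patankarMatrix hP)⟩
  refine ⟨hbij.existsUnique c, fun z hz => ⟨?_, ?_⟩⟩
  · exact pos_of_patankarMatrix_mulVec_pos hP (hz ▸ hc)
  · rw [← hz, sum_patankarMatrix_mulVec]

end PatankarMatrix

section MPRK

variable {ι κ : Type*} (p d : ι → ι → (ι → ℝ) → ℝ) (h : ℝ)
  (T : Finset κ) (w : κ → ℝ) (Y : κ → ι → ℝ) (ρ : ι → ℝ)

noncomputable def mprkMatrix : Matrix ι ι ℝ :=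
  of fun m ν => h * ∑ j ∈ T, w j * p m ν (Y j) / ρ ν

lemma mprkMatrix_nonneg (hp0 : ∀ m ν y, 0 ≤ p m ν y) (hh : 0 ≤ h) (hw : ∀ j, 0 ≤ w j)
    (hρ : ∀ ν, 0 < ρ ν) (m ν : ι) : 0 ≤ mprkMatrix p h T w Y ρ m ν :=
  mul_nonneg hh <| sum_nonneg fun j _ =>
    div_nonneg (mul_nonneg (hw j) (hp0 m ν (Y j))) (hρ ν).le

lemma mprk_increment_eq [Fintype ι] (hcons : ∀ m ν, p m ν = d ν m) (z : ι → ℝ) (m : ι) :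
    h * ∑ j ∈ T, w j * ∑ ν, (p m ν (Y j) * z ν / ρ ν - d m ν (Y j) * z m / ρ m) =
      ∑ ν, mprkMatrix p h T w Y ρ m ν * z ν - (∑ μ, mprkMatrix p h T w Y ρ μ m) * z m := by
  simp only [mprkMatrix, of_apply, hcons, mul_sum, sum_mul, ← sum_sub_distrib]
  rw [sum_comm]
  refine sum_congr rfl fun ν _ => sum_congr rfl fun j _ => ?_
  ring

lemma mprk_equation_iff [Fintype ι] [DecidableEq ι] (hcons : ∀ m ν, p m ν = d ν m)
    (yn z : ι → ℝ) :
    (∀ m, z m = yn m + h * ∑ j ∈ T, w j *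
        ∑ ν, (p m ν (Y j) * z ν / ρ ν - d m ν (Y j) * z m / ρ m)) ↔
      patankarMatrix (mprkMatrix p h T w Y ρ) *ᵥ z = yn := by
  simp only [funext_iff, patankarMatrix_mulVec_apply, mprk_increment_eq p d h T w Y ρ hcons]
  refine forall_congr' fun m => ?_
  constructor <;> intro hm <;> linarith

theorem mprk_equation_solution [Fintype ι] [DecidableEq ι] (hp0 : ∀ m ν y, 0 ≤ p m ν y)
    (hcons : ∀ m ν, p m ν = d ν m) (hh : 0 ≤ h) (hw : ∀ j, 0 ≤ w j) (hρ : ∀ ν, 0 < ρ ν)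
    {yn : ι → ℝ} (hyn : ∀ m, 0 < yn m) :
    (∃! z : ι → ℝ, ∀ m, z m = yn m + h * ∑ j ∈ T, w j *
        ∑ ν, (p m ν (Y j) * z ν / ρ ν - d m ν (Y j) * z m / ρ m)) ∧
      ∀ z : ι → ℝ, (∀ m, z m = yn m + h * ∑ j ∈ T, w j *
          ∑ ν, (p m ν (Y j) * z ν / ρ ν - d m ν (Y j) * z m / ρ m)) →
        (∀ m, 0 < z m) ∧ ∑ m, z m = ∑ m, yn m := by
  simp only [mprk_equation_iff p d h T w Y ρ hcons]
  exact patankarMatrix_mulVec_eq_pos (mprkMatrix_nonneg p h T w Y ρ hp0 hh hw hρ) hyn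

end MPRK

theorem stmt9_general (N s : ℕ)
    (p d : Fin N → Fin N → (Fin N → ℝ) → ℝ)
    (hp0 : ∀ m ν y, 0 ≤ p m ν y)
    (hcons : ∀ m ν, p m ν = d ν m)
    (a : Fin s → Fin s → ℝ) (b : Fin s → ℝ)
    (ha : ∀ i j, 0 ≤ a i j) (hb : ∀ j, 0 ≤ b j)
    (yn : Fin N → ℝ) (hyn : ∀ m, 0 < yn m)
    (h : ℝ) (hh : 0 ≤ h) :
    -- (1) stage equations
    (∀ i : Fin s, (i : ℕ) ≠ 0 →
      ∀ ρ : Fin N → ℝ, (∀ ν, 0 < ρ ν) →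
      ∀ Yprev : Fin s → Fin N → ℝ, (∀ j, j < i → ∀ m, 0 < Yprev j m) →
      (∃! z : Fin N → ℝ, ∀ m, z m = yn m +
          h * ∑ j ∈ Finset.univ.filter (fun j => j < i), a i j *
            ∑ ν, (p m ν (Yprev j) * z ν / ρ ν - d m ν (Yprev j) * z m / ρ m)) ∧
      (∀ z : Fin N → ℝ,
        (∀ m, z m = yn m +
          h * ∑ j ∈ Finset.univ.filter (fun j => j < i), a i j *
            ∑ ν, (p m ν (Yprev j) * z ν / ρ ν - d m ν (Yprev j) * z m / ρ m)) →
        (∀ m, 0 < z m) ∧ ∑ m, z m = ∑ m, yn m))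
    ∧
    -- (2) update equation
    (∀ σ : Fin N → ℝ, (∀ ν, 0 < σ ν) →
      ∀ Y : Fin s → Fin N → ℝ, (∀ j m, 0 < Y j m) →
      (∃! z : Fin N → ℝ, ∀ m, z m = yn m +
          h * ∑ j, b j *
            ∑ ν, (p m ν (Y j) * z ν / σ ν - d m ν (Y j) * z m / σ m)) ∧
      (∀ z : Fin N → ℝ,
        (∀ m, z m = yn m +
          h * ∑ j, b j *
            ∑ ν, (p m ν (Y j) * z ν / σ ν - d m ν (Y j) * z m / σ m)) →
        (∀ m, 0 < z m) ∧ ∑ m, z m = ∑ m, yn m)) :=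
  ⟨fun i _ ρ hρ Yprev _ =>
    mprk_equation_solution p d h _ (a i) Yprev ρ hp0 hcons hh (ha i) hρ hyn,
   fun σ hσ Y _ => mprk_equation_solution p d h _ b Y σ hp0 hcons hh hb hσ hyn⟩

/-- Unique solvability, unconditional positivity and conservativity of the
MPRK stage and update equations (cf. [MPRK2, Lemmas 2.8 and 3.1]). -/
theorem stmt9 (N s : ℕ)
    (p d : Fin N → Fin N → (Fin N → ℝ) → ℝ)
    (hp0 : ∀ m ν y, 0 ≤ p m ν y) (hd0 : ∀ m ν y, 0 ≤ d m ν y)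
    (hpc : ∀ m ν, Continuous (p m ν)) (hdc : ∀ m ν, Continuous (d m ν))
    (hcons : ∀ m ν, p m ν = d ν m)
    (hdiagp : ∀ m, p m m = 0) (hdiagd : ∀ m, d m m = 0)
    (a : Fin s → Fin s → ℝ) (b : Fin s → ℝ)
    (hexp : ∀ i j : Fin s, i ≤ j → a i j = 0)
    (ha : ∀ i j, 0 ≤ a i j) (hb : ∀ j, 0 ≤ b j)
    (yn : Fin N → ℝ) (hyn : ∀ m, 0 < yn m)
    (h : ℝ) (hh : 0 ≤ h) :
    -- (1) stage equations
    (∀ i : Fin s, (i : ℕ) ≠ 0 →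
      ∀ ρ : Fin N → ℝ, (∀ ν, 0 < ρ ν) →
      ∀ Yprev : Fin s → Fin N → ℝ, (∀ j, j < i → ∀ m, 0 < Yprev j m) →
      (∃! z : Fin N → ℝ, ∀ m, z m = yn m +
          h * ∑ j ∈ Finset.univ.filter (fun j => j < i), a i j *
            ∑ ν, (p m ν (Yprev j) * z ν / ρ ν - d m ν (Yprev j) * z m / ρ m)) ∧
      (∀ z : Fin N → ℝ,
        (∀ m, z m = yn m +
          h * ∑ j ∈ Finset.univ.filter (fun j => j < i), a i j *
            ∑ ν, (p m ν (Yprev j) * z ν / ρ ν - d m ν (Yprev j) * z m / ρ m)) →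
        (∀ m, 0 < z m) ∧ ∑ m, z m = ∑ m, yn m))
    ∧
    -- (2) update equation
    (∀ σ : Fin N → ℝ, (∀ ν, 0 < σ ν) →
      ∀ Y : Fin s → Fin N → ℝ, (∀ j m, 0 < Y j m) →
      (∃! z : Fin N → ℝ, ∀ m, z m = yn m +
          h * ∑ j, b j *
            ∑ ν, (p m ν (Y j) * z ν / σ ν - d m ν (Y j) * z m / σ m)) ∧
      (∀ z : Fin N → ℝ,
        (∀ m, z m = yn m +
          h * ∑ j, b j *
            ∑ ν, (p m ν (Y j) * z ν / σ ν - d m ν (Y j) * z m / σ m)) →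
        (∀ m, 0 < z m) ∧ ∑ m, z m = ∑ m, yn m)) :=
  stmt9_general N s p d hp0 hcons a b ha hb yn hyn h hh
end
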